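/- arXiv:2508.09396 — 5 statements merged into one kernel-verified Lean document; each statement's English description precedes it below -/
import Mathlib

section
/- (Reflection Principle) For the general α-cap process (ψ_t), let H be an oriented hyperplane. Suppose that for some t ≥ 1 and all x ∈ H⁻, ψ_t(x) ≤ ψ_t(x^H). Then for all s ≥ t and all x ∈ H⁻, ψ_s(x) ≤ ψ_s(x^H). -/
open MeasureTheory Filter Metric

noncomputable section

abbrev Euc (d : ℕ) := EuclideanSpace ℝ (Fin d)

/-- Reflection of `x` across the hyperplane `{y : ⟪y, u⟫ = a}`. -/
def reflectH {d : ℕ} (u : Euc d) (a : ℝ) (x : Euc d) : Euc d :=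
  x - (2 * ((inner ℝ x u : ℝ) - a)) • u

/-- `{y : ⟪y, u⟫ = a}` is a reflecting hyperplane for `ψ`. -/
def IsReflecting {d : ℕ} (ψ : Euc d → ℝ) (u : Euc d) (a : ℝ) : Prop :=
  ∀ x : Euc d, (inner ℝ x u : ℝ) < a → ψ x ≤ ψ (reflectH u a x)

/-- Assumptions on the kernel `g`, with radial profile `gt`. -/
structure IsKernel {d : ℕ} (g : Euc d → ℝ) (gt : ℝ → ℝ) : Prop where
  radial : ∀ x : Euc d, g x = gt ‖x‖
  mem_Icc : ∀ x : Euc d, g x ∈ Set.Icc (0 : ℝ) 1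
  at_zero : g (0 : Euc d) = 1
  pos : ∀ x : Euc d, 0 < g x
  lipschitz : ∃ K : NNReal, LipschitzWith K g
  contDiff : ContDiff ℝ 2 g
  deriv_neg : ∀ r : ℝ, 0 < r → deriv gt r < 0

/-- The general α-cap process. -/
structure IsAlphaCap {d : ℕ} (ψ : ℕ → Euc d → ℝ) (g : Euc d → ℝ) (gt : ℝ → ℝ)
    (γ : ℕ → ℝ → ℝ) (R : ℝ) : Prop where
  kernel : IsKernel g gt
  psi_mem : ∀ t x, ψ t x ∈ Set.Icc (0 : ℝ) 1
  psi_integrable : ∀ t, Integrable (ψ t)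
  gamma_mono : ∀ t, Monotone (γ t)
  gamma_mem : ∀ t r, γ t r ∈ Set.Icc (0 : ℝ) 1
  R_pos : 0 < R
  update : ∀ t x, ψ (t + 1) x = γ t (∫ y, ψ t y * g (x - y))
  support : ∀ t x, R < ‖x‖ → ψ (t + 1) x = 0

/-- The fixed-volume α-cap process. -/
structure IsFixedVolCap {d : ℕ} (A : ℕ → Set (Euc d)) (g : Euc d → ℝ) (gt : ℝ → ℝ)
    (α : ℝ) : Prop where
  kernel : IsKernel g gt
  alpha_pos : 0 < α
  A0_compact : IsCompact (A 0)
  A0_vol : volume (A 0) = ENNReal.ofReal α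
  update : ∀ t, A (t + 1) =
    {x : Euc d |
      sInf {c : ℝ | 0 < c ∧
        volume {y : Euc d | c ≤ ∫ z in A t, g (y - z)} < ENNReal.ofReal α} ≤
      ∫ z in A t, g (x - z)}

def slabA {d : ℕ} (ψ : Euc d → ℝ) (u : Euc d) : ℝ :=
  sSup {a : ℝ | ∀ c < a, IsReflecting ψ u c}

def slabWidth {d : ℕ} (ψ : Euc d → ℝ) (u : Euc d) : ℝ :=
  - slabA ψ (-u) - slabA ψ u

def slabSup {d : ℕ} (ψ : Euc d → ℝ) : ℝ :=
  sSup {w : ℝ | ∃ u : Euc d, ‖u‖ = 1 ∧ w = slabWidth ψ u}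

namespace ReflectAux

variable {d : ℕ}

lemma inner_reflectH (u : Euc d) (hu : ‖u‖ = 1) (a : ℝ) (x : Euc d) :
    (inner ℝ (reflectH u a x) u : ℝ) = 2 * a - (inner ℝ x u : ℝ) := by
  rw [reflectH, inner_sub_left, real_inner_smul_left, real_inner_self_eq_norm_sq, hu]
  ring

lemma reflectH_reflectH (u : Euc d) (hu : ‖u‖ = 1) (a : ℝ) (x : Euc d) :
    reflectH u a (reflectH u a x) = x := by
  have h := inner_reflectH u hu a x
  rw [reflectH, h]
  rw [reflectH]
  have : (2 * (2 * a - (inner ℝ x u : ℝ) - a)) = -(2 * ((inner ℝ x u : ℝ) - a)) := by ring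
  rw [this, neg_smul]
  abel

lemma reflect_norm_sq (u : Euc d) (hu : ‖u‖ = 1) (a : ℝ) (x y : Euc d) :
    ‖reflectH u a x - y‖^2
      = ‖x - y‖^2 + 4*((inner ℝ x u : ℝ) - a)*((inner ℝ y u : ℝ) - a) := by
  have h1 : reflectH u a x - y = (x - y) - (2*((inner ℝ x u:ℝ)-a)) • u := by
    rw [reflectH]; abel
  rw [h1, norm_sub_sq_real, real_inner_smul_right, norm_smul, inner_sub_left, hu]
  simp only [mul_pow, sq_abs, mul_one, Real.norm_eq_abs, one_pow]
  ring

/-- the reflection as a measurable equivalence -/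
def refEquiv (u : Euc d) (a : ℝ) : Euc d ≃ᵐ Euc d :=
  ((Submodule.reflection ((ℝ ∙ u)ᗮ)).toHomeomorph.toMeasurableEquiv).trans
    (MeasurableEquiv.addRight ((2*a) • u))

lemma refEquiv_apply (u : Euc d) (hu : ‖u‖ = 1) (a : ℝ) (y : Euc d) :
    refEquiv u a y = reflectH u a y := by
  have hL : Submodule.reflection ((ℝ ∙ u)ᗮ) y = y - (2 * (inner ℝ y u : ℝ)) • u := by
    rw [Submodule.reflection_orthogonal_apply, Submodule.reflection_singleton_apply, hu, real_inner_comm u y]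
    rw [← Nat.cast_smul_eq_nsmul ℝ, smul_smul]
    norm_num
  show Submodule.reflection ((ℝ ∙ u)ᗮ) y + (2*a) • u = reflectH u a y
  rw [hL, reflectH]
  have : (2 * ((inner ℝ y u : ℝ) - a)) • u = (2 * (inner ℝ y u : ℝ)) • u - (2*a) • u := by
    rw [← sub_smul]; ring_nf
  rw [this]
  abel

lemma refEquiv_measurePreserving (u : Euc d) (a : ℝ) :
    MeasurePreserving (refEquiv u a) (volume : Measure (Euc d)) volume := by
  have h1 : MeasurePreserving (Submodule.reflection ((ℝ ∙ u)ᗮ)) (volume : Measure (Euc d)) volume :=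
    (Submodule.reflection ((ℝ ∙ u)ᗮ)).measurePreserving
  have h2 : MeasurePreserving (· + (2*a) • u) (volume : Measure (Euc d)) volume :=
    measurePreserving_add_right volume _
  exact h2.comp h1

lemma integral_reflect (u : Euc d) (hu : ‖u‖ = 1) (a : ℝ) (h : Euc d → ℝ) :
    ∫ y, h (reflectH u a y) = ∫ y, h y := by
  have := (refEquiv_measurePreserving u a).integral_comp' (f := refEquiv u a) h
  rw [← this]
  congr 1
  ext y
  rw [refEquiv_apply u hu a]

lemma gt_antitone {g : Euc d → ℝ} {gt : ℝ → ℝ} (hker : IsKernel g gt)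
    (u : Euc d) (hu : ‖u‖ = 1) :
    ∀ ⦃x y : Euc d⦄, ‖x‖ ≤ ‖y‖ → g y ≤ g x := by
  have hgt : ∀ r : ℝ, 0 ≤ r → gt r = g (r • u) := by
    intro r hr
    rw [hker.radial, norm_smul, Real.norm_eq_abs, abs_of_nonneg hr, hu, mul_one]
  have hcont : ContinuousOn gt (Set.Ici 0) := by
    have hc : Continuous (fun r : ℝ => g (r • u)) :=
      hker.contDiff.continuous.comp (continuous_id.smul continuous_const)
    exact hc.continuousOn.congr fun r hr => hgt r hr
  have hanti : StrictAntiOn gt (Set.Ici 0) := by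
    apply strictAntiOn_of_deriv_neg (convex_Ici 0) hcont
    intro r hr
    rw [interior_Ici] at hr
    exact hker.deriv_neg r hr
  intro x y hxy
  rw [hker.radial x, hker.radial y]
  exact hanti.antitoneOn (norm_nonneg x) (le_trans (norm_nonneg x) hxy) hxy

lemma norm_le_of_sq_le {b c : ℝ} (hb : 0 ≤ c) (h : b^2 ≤ c^2) (hb0 : 0 ≤ b) : b ≤ c :=
  le_of_pow_le_pow_left₀ two_ne_zero hb h

/-- The key one-step inequality. -/
lemma step {g : Euc d → ℝ} {gt : ℝ → ℝ} (hker : IsKernel g gt)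
    {φ : Euc d → ℝ} (hint : Integrable φ) (hmem : ∀ x, φ x ∈ Set.Icc (0:ℝ) 1)
    (u : Euc d) (hu : ‖u‖ = 1) (a : ℝ) (href : IsReflecting φ u a)
    (x : Euc d) (hx : (inner ℝ x u : ℝ) < a) :
    ∫ y, φ y * g (x - y) ≤ ∫ y, φ y * g (reflectH u a x - y) := by
  set T : Euc d → Euc d := reflectH u a with hT
  set x' : Euc d := reflectH u a x with hx'
  -- norm identities
  have hsym : ∀ y : Euc d, ‖x - T y‖ = ‖x' - y‖ := by
    intro y
    have h1 : ‖T y - x‖^2 = ‖y - x‖^2 + 4*((inner ℝ y u : ℝ) - a)*((inner ℝ x u : ℝ) - a) :=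
      reflect_norm_sq u hu a y x
    have h2 : ‖x' - y‖^2 = ‖x - y‖^2 + 4*((inner ℝ x u : ℝ) - a)*((inner ℝ y u : ℝ) - a) :=
      reflect_norm_sq u hu a x y
    have h3 : ‖x - T y‖ = ‖T y - x‖ := norm_sub_rev _ _
    have h4 : ‖y - x‖ = ‖x - y‖ := norm_sub_rev _ _
    have hsq : ‖x - T y‖^2 = ‖x' - y‖^2 := by rw [h3, h1, h4, h2]; ring
    have := congrArg Real.sqrt hsq
    rwa [Real.sqrt_sq (norm_nonneg _), Real.sqrt_sq (norm_nonneg _)] at this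
  have hsym2 : ∀ y : Euc d, ‖x' - T y‖ = ‖x - y‖ := by
    intro y
    have h1 : ‖x' - T y‖^2 = ‖x - T y‖^2 + 4*((inner ℝ x u : ℝ) - a)*((inner ℝ (T y) u : ℝ) - a) :=
      reflect_norm_sq u hu a x (T y)
    have h2 := hsym y
    have h3 : ‖x' - y‖^2 = ‖x - y‖^2 + 4*((inner ℝ x u : ℝ) - a)*((inner ℝ y u : ℝ) - a) :=
      reflect_norm_sq u hu a x y
    have h4 : (inner ℝ (T y) u : ℝ) = 2*a - (inner ℝ y u : ℝ) := inner_reflectH u hu a y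
    have hsq : ‖x' - T y‖^2 = ‖x - y‖^2 := by
      rw [h1, h2, h3, h4]; ring
    have := congrArg Real.sqrt hsq
    rwa [Real.sqrt_sq (norm_nonneg _), Real.sqrt_sq (norm_nonneg _)] at this
  have hg_eq1 : ∀ y : Euc d, g (x - T y) = g (x' - y) := by
    intro y; rw [hker.radial, hker.radial, hsym y]
  have hg_eq2 : ∀ y : Euc d, g (x' - T y) = g (x - y) := by
    intro y; rw [hker.radial, hker.radial, hsym2 y]
  -- measurability / integrability
  have hgmeas : ∀ z : Euc d, AEStronglyMeasurable (fun y => g (z - y)) volume :=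
    fun z => (hker.contDiff.continuous.comp (continuous_const.sub continuous_id)).aestronglyMeasurable
  have hbound : ∀ (φ' : Euc d → ℝ), (∀ y, φ' y ∈ Set.Icc (0:ℝ) 1) → Integrable φ' →
      ∀ z : Euc d, Integrable (fun y => φ' y * g (z - y)) := by
    intro φ' hmem' hint' z
    refine hint'.mono (hint'.aestronglyMeasurable.mul (hgmeas z)) ?_
    filter_upwards with y
    rw [Real.norm_eq_abs, Real.norm_eq_abs, abs_mul]
    have h1 : |g (z - y)| ≤ 1 := by
      rw [abs_of_nonneg (hker.mem_Icc _).1]; exact (hker.mem_Icc _).2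
    nlinarith [abs_nonneg (φ' y), abs_nonneg (g (z - y))]
  have hφT_mem : ∀ y, φ (T y) ∈ Set.Icc (0:ℝ) 1 := fun y => hmem (T y)
  have hφT_int : Integrable (fun y => φ (T y)) := by
    have : Integrable (φ ∘ (refEquiv u a)) volume :=
      ((refEquiv_measurePreserving u a).integrable_comp_emb
        (refEquiv u a).measurableEmbedding).mpr hint
    refine this.congr ?_
    filter_upwards with y
    simp only [Function.comp_apply, refEquiv_apply u hu a]
    rfl
  have J1 : Integrable (fun y => φ (T y) * g (x - y)) := hbound _ hφT_mem hφT_int x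
  have J2 : Integrable (fun y => φ (T y) * g (x' - y)) := hbound _ hφT_mem hφT_int x'
  have J3 : Integrable (fun y => φ y * g (x - y)) := hbound _ hmem hint x
  have J4 : Integrable (fun y => φ y * g (x' - y)) := hbound _ hmem hint x'
  -- change of variables identities
  have e1 : ∫ y, φ (T y) * g (x - y) = ∫ y, φ y * g (x' - y) := by
    have := integral_reflect u hu a (fun y => φ y * g (x - T y))
    calc ∫ y, φ (T y) * g (x - y)
        = ∫ y, φ (T y) * g (x - T (T y)) := by
          congr 1; ext y; rw [show T (T y) = y from reflectH_reflectH u hu a y]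
      _ = ∫ y, φ y * g (x - T y) := this
      _ = ∫ y, φ y * g (x' - y) := by congr 1; ext y; rw [hg_eq1 y]
  have e2 : ∫ y, φ (T y) * g (x' - y) = ∫ y, φ y * g (x - y) := by
    have := integral_reflect u hu a (fun y => φ y * g (x' - T y))
    calc ∫ y, φ (T y) * g (x' - y)
        = ∫ y, φ (T y) * g (x' - T (T y)) := by
          congr 1; ext y; rw [show T (T y) = y from reflectH_reflectH u hu a y]
      _ = ∫ y, φ y * g (x' - T y) := this
      _ = ∫ y, φ y * g (x - y) := by congr 1; ext y; rw [hg_eq2 y]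
  -- pointwise nonnegativity
  have hpt : ∀ y : Euc d, 0 ≤ (φ (T y) - φ y) * (g (x - y) - g (x' - y)) := by
    intro y
    rcases lt_trichotomy ((inner ℝ y u : ℝ)) a with hq | hq | hq
    · apply mul_nonneg
      · exact sub_nonneg.2 (href y hq)
      · apply sub_nonneg.2
        apply gt_antitone hker u hu
        apply norm_le_of_sq_le (norm_nonneg _) _ (norm_nonneg _)
        rw [reflect_norm_sq u hu a x y]
        nlinarith [sub_neg.2 hx, sub_neg.2 hq]
    · have hTy : T y = y := by
        rw [hT, reflectH, hq]; simp
      rw [hTy]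
      simp
    · have h1 : φ (T y) - φ y ≤ 0 := by
        apply sub_nonpos.2
        have h1' : (inner ℝ (T y) u : ℝ) < a := by
          rw [show T y = reflectH u a y from rfl, inner_reflectH u hu a y]; linarith
        have h2' := href (T y) h1'
        rwa [show reflectH u a (T y) = y from reflectH_reflectH u hu a y] at h2'
      have h2 : g (x - y) - g (x' - y) ≤ 0 := by
        apply sub_nonpos.2
        apply gt_antitone hker u hu
        apply norm_le_of_sq_le (norm_nonneg _) _ (norm_nonneg _)
        rw [show (x' : Euc d) = reflectH u a x from rfl, reflect_norm_sq u hu a x y]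
        nlinarith [sub_neg.2 hx, sub_pos.2 hq]
      nlinarith
  have hD : 0 ≤ ∫ y, (φ (T y) - φ y) * (g (x - y) - g (x' - y)) :=
    integral_nonneg hpt
  have hexp : ∫ y, (φ (T y) - φ y) * (g (x - y) - g (x' - y))
      = ((∫ y, φ (T y) * g (x - y)) - (∫ y, φ (T y) * g (x' - y)))
        - ((∫ y, φ y * g (x - y)) - (∫ y, φ y * g (x' - y))) := by
    have hfun : (fun y => (φ (T y) - φ y) * (g (x - y) - g (x' - y)))
        = fun y => (φ (T y) * g (x - y) - φ (T y) * g (x' - y))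
            - (φ y * g (x - y) - φ y * g (x' - y)) := by
      ext y; ring
    have J12 : Integrable (fun y => φ (T y) * g (x - y) - φ (T y) * g (x' - y)) := J1.sub J2
    have J34 : Integrable (fun y => φ y * g (x - y) - φ y * g (x' - y)) := J3.sub J4
    rw [hfun, integral_sub J12 J34, integral_sub J1 J2, integral_sub J3 J4]
  rw [hexp, e1, e2] at hD
  linarith

end ReflectAux

/-- **Reflection Principle.** If for some `t ≥ 1` the hyperplane `{x : ⟪x,u⟫ = a}` is
reflecting for `ψ t`, then it is reflecting for `ψ s` for all `s ≥ t`. -/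
theorem stmt2 {d : ℕ} (ψ : ℕ → Euc d → ℝ) (g : Euc d → ℝ) (gt : ℝ → ℝ)
    (γ : ℕ → ℝ → ℝ) (R : ℝ) (hproc : IsAlphaCap ψ g gt γ R)
    (u : Euc d) (hu : ‖u‖ = 1) (a : ℝ) (t : ℕ) (ht : 1 ≤ t)
    (hH : IsReflecting (ψ t) u a) :
    ∀ s : ℕ, t ≤ s → IsReflecting (ψ s) u a := by
  intro s hs
  induction s, hs using Nat.le_induction with
  | base => exact hH
  | succ n hn ih =>
    intro x hx
    rw [hproc.update n x, hproc.update n (reflectH u a x)]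
    exact hproc.gamma_mono n
      (ReflectAux.step hproc.kernel (hproc.psi_integrable n) (fun y => hproc.psi_mem n y)
        u hu a ih x hx)

end
end

section
/- Let ψ : ℝ^d → [0,1] be measurable with bounded support and ∫_{ℝ^d} ψ(x) dx > 0. Then the intersection over all reflecting hyperplanes H for ψ of the closed half-spaces closure(H⁺) is nonempty. -/
open MeasureTheory Filter Metric

noncomputable section

lemma integrable_aux {d : ℕ} {E : Type*} [NormedAddCommGroup E]
    (F : Euc d → E) (hF : AEStronglyMeasurable F volume) {C R : ℝ}
    (hsupp : ∀ x : Euc d, R < ‖x‖ → F x = 0)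
    (hbound : ∀ x : Euc d, ‖x‖ ≤ R → ‖F x‖ ≤ C) : Integrable F := by
  refine Integrable.mono'
    (g := (Metric.closedBall (0:Euc d) R).indicator fun _ => C) ?_ hF ?_
  · exact (integrable_indicator_iff measurableSet_closedBall).2
      (integrableOn_const measure_closedBall_lt_top.ne)
  · filter_upwards with x
    by_cases h : ‖x‖ ≤ R
    · rw [Set.indicator_of_mem (by simpa [Metric.mem_closedBall, dist_zero_right] using h)]
      exact hbound x h
    · rw [hsupp x (not_le.1 h),
        Set.indicator_of_notMem (by simpa [Metric.mem_closedBall, dist_zero_right] using h)]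
      simp

/-- The reflection `x ↦ x - 2⟪x,u⟫u` as a linear isometry equivalence. -/
def reflLIE {d : ℕ} (u : Euc d) (hu : ‖u‖ = 1) : Euc d ≃ₗᵢ[ℝ] Euc d where
  toLinearEquiv := LinearEquiv.ofInvolutive
    { toFun := fun x => x - (2 * (inner ℝ x u : ℝ)) • u
      map_add' := by
        intro x y
        simp only [inner_add_left]
        module
      map_smul' := by
        intro c x
        simp only [real_inner_smul_left, RingHom.id_apply]
        module }
    (by
      intro x
      have huu : (inner ℝ u u : ℝ) = 1 := by
        rw [real_inner_self_eq_norm_sq, hu]; norm_num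
      simp only [LinearMap.coe_mk, AddHom.coe_mk, inner_sub_left, real_inner_smul_left, huu]
      module)
  norm_map' := by
    intro x
    show ‖x - (2 * (inner ℝ x u : ℝ)) • u‖ = ‖x‖
    have huu : (inner ℝ u u : ℝ) = 1 := by
      rw [real_inner_self_eq_norm_sq, hu]; norm_num
    have h2 : ‖x - (2 * (inner ℝ x u : ℝ)) • u‖ ^ 2 = ‖x‖ ^ 2 := by
      rw [← real_inner_self_eq_norm_sq, ← real_inner_self_eq_norm_sq]
      simp only [inner_sub_left, inner_sub_right, real_inner_smul_left, real_inner_smul_right,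
        huu]
      ring_nf
      rw [real_inner_comm u x]
      ring
    rw [← Real.sqrt_sq (norm_nonneg (x - (2 * (inner ℝ x u : ℝ)) • u)),
      ← Real.sqrt_sq (norm_nonneg x), h2]

lemma reflectH_measurePreserving {d : ℕ} {u : Euc d} (hu : ‖u‖ = 1) (a : ℝ) :
    MeasurePreserving (reflectH u a) (volume : Measure (Euc d)) volume ∧
      MeasurableEmbedding (reflectH u a) := by
  set L : Euc d ≃ₗᵢ[ℝ] Euc d := reflLIE u hu with hLdef
  have hLap : ∀ x : Euc d, L x = x - (2 * (inner ℝ x u : ℝ)) • u := fun x => rfl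
  have hT : reflectH u a = (fun z => z + (2 * a) • u) ∘ L := by
    funext x
    simp only [Function.comp_apply, hLap x, reflectH]
    module
  have hMP : MeasurePreserving (reflectH u a) (volume : Measure (Euc d)) volume := by
    rw [hT]
    exact (measurePreserving_add_right volume ((2*a) • u)).comp L.measurePreserving
  refine ⟨hMP, ?_⟩
  have : reflectH u a = (L.toHomeomorph.trans (Homeomorph.addRight ((2*a) • u))) := by
    rw [hT]; rfl
  rw [this]
  exact (L.toHomeomorph.trans (Homeomorph.addRight ((2*a) • u))).measurableEmbedding

/-- The closed half-spaces `closure H⁺` over all reflecting hyperplanes `H` for `ψ`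
have a common point. -/
theorem stmt9 {d : ℕ} (ψ : Euc d → ℝ) (hmeas : Measurable ψ)
    (hmem : ∀ x, ψ x ∈ Set.Icc (0:ℝ) 1)
    (hbdd : Bornology.IsBounded {x : Euc d | ψ x ≠ 0})
    (hpos : 0 < ∫ x, ψ x) :
    ∃ p : Euc d, ∀ (u : Euc d) (a : ℝ), ‖u‖ = 1 → IsReflecting ψ u a →
      a ≤ (inner ℝ p u : ℝ) := by
  obtain ⟨R, hR⟩ := hbdd.subset_closedBall 0
  have hRsupp : ∀ x : Euc d, R < ‖x‖ → ψ x = 0 := by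
    intro x hx
    by_contra h
    have := hR h
    rw [Metric.mem_closedBall, dist_zero_right] at this
    linarith
  have habs : ∀ x : Euc d, |ψ x| ≤ 1 := by
    intro x; rcases hmem x with ⟨h0, h1⟩; rw [abs_of_nonneg h0]; exact h1
  have hψint : Integrable ψ :=
    integrable_aux ψ hmeas.aestronglyMeasurable hRsupp
      (fun x _ => by simpa [Real.norm_eq_abs] using habs x)
  have hvec : Integrable (fun x : Euc d => ψ x • x) := by
    refine integrable_aux (fun x => ψ x • x)
      (hmeas.aestronglyMeasurable.smul aestronglyMeasurable_id) (R := R) (C := R)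
      (fun x hx => by show ψ x • x = 0; rw [hRsupp x hx, zero_smul]) ?_
    intro x hx
    rw [norm_smul]
    calc ‖ψ x‖ * ‖x‖ ≤ 1 * ‖x‖ := by
          exact mul_le_mul_of_nonneg_right (by simpa [Real.norm_eq_abs] using habs x)
            (norm_nonneg x)
      _ = ‖x‖ := one_mul _
      _ ≤ R := hx
  set I : ℝ := ∫ x, ψ x with hI
  refine ⟨I⁻¹ • ∫ x, ψ x • x, ?_⟩
  intro u a hu hrefl
  -- integrability of the moment functions
  have hinner_int : Integrable (fun x : Euc d => ψ x * (inner ℝ x u : ℝ)) := by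
    refine integrable_aux _ ?_ ?_ (C := |R|) (R := R) ?_
    · exact (hmeas.mul
        ((Continuous.inner (continuous_id (X := Euc d)) continuous_const)).measurable).aestronglyMeasurable
    · intro x hx; rw [hRsupp x hx, zero_mul]
    · intro x hx
      rw [Real.norm_eq_abs, abs_mul]
      calc |ψ x| * |(inner ℝ x u : ℝ)| ≤ 1 * |(inner ℝ x u : ℝ)| :=
            mul_le_mul_of_nonneg_right (habs x) (abs_nonneg _)
        _ = |(inner ℝ x u : ℝ)| := one_mul _
        _ ≤ ‖x‖ * ‖u‖ := abs_real_inner_le_norm x u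
        _ = ‖x‖ := by rw [hu, mul_one]
        _ ≤ R := hx
        _ ≤ |R| := le_abs_self R
  set T : Euc d → Euc d := reflectH u a with hT
  have huu : (inner ℝ u u : ℝ) = 1 := by
    rw [real_inner_self_eq_norm_sq, hu]; norm_num
  have hinnerT : ∀ x : Euc d, (inner ℝ (T x) u : ℝ) = 2 * a - (inner ℝ x u : ℝ) := by
    intro x
    simp only [hT, reflectH, inner_sub_left, real_inner_smul_left, huu]
    ring
  have hTT : ∀ x : Euc d, T (T x) = x := by
    intro x
    simp only [hT, reflectH]
    rw [show (inner ℝ (x - (2 * ((inner ℝ x u :ℝ) - a)) • u) u : ℝ)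
        = 2 * a - (inner ℝ x u : ℝ) from hinnerT x]
    module
  obtain ⟨hMP, hemb⟩ := reflectH_measurePreserving hu a
  set f : Euc d → ℝ := fun x => ((inner ℝ x u : ℝ) - a) * ψ x with hf
  have hfint : Integrable f := by
    have : f = fun x => ψ x * (inner ℝ x u : ℝ) - a * ψ x := by funext x; simp [hf]; ring
    rw [this]
    exact hinner_int.sub (hψint.const_mul a)
  have hfTint : Integrable (f ∘ T) := (hMP.integrable_comp_emb hemb).2 hfint
  have hIeq : ∫ x, f (T x) = ∫ x, f x := hMP.integral_comp hemb f
  have hnonneg : ∀ x : Euc d, 0 ≤ f x + f (T x) := by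
    intro x
    have hfTx : f (T x) = -((inner ℝ x u : ℝ) - a) * ψ (T x) := by
      simp only [hf, hinnerT x]; ring
    rw [hfTx, show f x = ((inner ℝ x u : ℝ) - a) * ψ x from rfl]
    have key : 0 ≤ ((inner ℝ x u : ℝ) - a) * (ψ x - ψ (T x)) := by
      rcases lt_trichotomy ((inner ℝ x u : ℝ)) a with h | h | h
      · have hψle : ψ x ≤ ψ (T x) := hrefl x h
        nlinarith [hψle]
      · simp [h]
      · have hlt : (inner ℝ (T x) u : ℝ) < a := by rw [hinnerT x]; linarith
        have := hrefl (T x) hlt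
        rw [← hT, hTT x] at this
        exact mul_nonneg (by linarith) (by linarith)
    linarith [key]
  have hsum : 0 ≤ ∫ x, (f x + (f ∘ T) x) := integral_nonneg (fun x => hnonneg x)
  rw [integral_add hfint hfTint] at hsum
  have hIeq' : ∫ x, (f ∘ T) x = ∫ x, f x := hIeq
  rw [hIeq'] at hsum
  have hIf : 0 ≤ ∫ x, f x := by linarith
  have hsplit : ∫ x, f x = (∫ x, ψ x * (inner ℝ x u : ℝ)) - a * I := by
    have : f = fun x => ψ x * (inner ℝ x u : ℝ) - a * ψ x := by funext x; simp [hf]; ring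
    rw [this, integral_sub hinner_int (hψint.const_mul a), integral_const_mul, hI]
  have hJ : a * I ≤ ∫ x, ψ x * (inner ℝ x u : ℝ) := by
    rw [hsplit] at hIf; linarith
  -- compute the inner product with the barycenter
  have hbar : (inner ℝ (I⁻¹ • ∫ x, ψ x • x) u : ℝ)
      = I⁻¹ * ∫ x, ψ x * (inner ℝ x u : ℝ) := by
    rw [real_inner_smul_left]
    congr 1
    have := (ContinuousLinearMap.integral_comp_comm (innerSL ℝ u) hvec).symm
    simp only [innerSL_apply_apply] at this
    rw [real_inner_comm, this]
    congr 1
    funext x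
    rw [real_inner_smul_right, real_inner_comm]
  rw [hbar]
  have hIpos : 0 < I := hpos
  calc a = I⁻¹ * (a * I) := by field_simp
    _ ≤ I⁻¹ * ∫ x, ψ x * (inner ℝ x u : ℝ) :=
        mul_le_mul_of_nonneg_left hJ (by positivity)

end
end

section
/- Let p ∈ ℝ^d, ε > 0, and let ψ : ℝ^d → [0,1] have the property that every oriented hyperplane H with B(p, ε) ⊆ H⁺ is a reflecting hyperplane for ψ. Then for any x, y ∈ ℝ^d satisfying ‖x − p‖ − ‖y − p‖ > 2ε, we have ψ(x) ≤ ψ(y). -/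
open MeasureTheory Filter Metric

noncomputable section

/-- If every hyperplane whose positive side contains `B(p,ε)` is reflecting for `ψ`, then
`ψ` is monotone along distance from `p`, up to a `2ε` margin. -/
theorem stmt11 {d : ℕ} (p : Euc d) (ε : ℝ) (hε : 0 < ε) (ψ : Euc d → ℝ)
    (hmem : ∀ x, ψ x ∈ Set.Icc (0:ℝ) 1)
    (hrefl : ∀ (u : Euc d) (a : ℝ), ‖u‖ = 1 →
      ball p ε ⊆ {x : Euc d | a < (inner ℝ x u : ℝ)} → IsReflecting ψ u a)
    (x y : Euc d) (hxy : 2 * ε < ‖x - p‖ - ‖y - p‖) :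
    ψ x ≤ ψ y := by
  have hxyne : y ≠ x := by
    intro h; rw [h] at hxy; simp at hxy; linarith
  set v := y - x with hv
  have hvne : v ≠ 0 := sub_ne_zero.2 hxyne
  have hn : (0:ℝ) < ‖v‖ := norm_pos_iff.2 hvne
  set u := ‖v‖⁻¹ • v with hu
  have hu1 : ‖u‖ = 1 := by
    rw [hu, norm_smul, norm_inv, norm_norm, inv_mul_cancel₀ hn.ne']
  set a := (inner ℝ x u : ℝ) + ‖v‖ / 2 with ha
  -- norm identity: ‖x-p‖² - ‖y-p‖² = 2⟪p-x,v⟫ - ‖v‖²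
  have hid : ‖x - p‖ ^ 2 - ‖y - p‖ ^ 2 = 2 * (inner ℝ (p - x) v : ℝ) - ‖v‖ ^ 2 := by
    have h1 : y - p = (x - p) + v := by rw [hv]; abel
    have h2 : (inner ℝ (p - x) v : ℝ) = - (inner ℝ (x - p) v : ℝ) := by
      rw [← inner_neg_left]; norm_num
    rw [h1, norm_add_sq_real, h2]; ring
  have htri : ‖v‖ ≤ ‖x - p‖ + ‖y - p‖ := by
    calc ‖v‖ = ‖(y - p) - (x - p)‖ := by congr 1; rw [hv]; abel
    _ ≤ ‖y - p‖ + ‖x - p‖ := norm_sub_le _ _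
    _ = ‖x - p‖ + ‖y - p‖ := by ring
  have key : ball p ε ⊆ {z : Euc d | a < (inner ℝ z u : ℝ)} := by
    intro z hz
    simp only [Set.mem_setOf_eq]
    have h1 : (inner ℝ z u : ℝ) = (inner ℝ x u : ℝ) + ‖v‖⁻¹ * (inner ℝ (z - x) v : ℝ) := by
      rw [hu, real_inner_smul_right, real_inner_smul_right, inner_sub_left]; ring
    have hzp : -(ε * ‖v‖) < (inner ℝ (z - p) v : ℝ) := by
      have h2 := abs_real_inner_le_norm (z - p) v
      have hzn : ‖z - p‖ < ε := mem_ball_iff_norm.1 hz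
      have h3 := neg_abs_le (inner ℝ (z - p) v : ℝ)
      nlinarith [norm_nonneg (z - p)]
    have hsplit : (inner ℝ (z - x) v : ℝ) = (inner ℝ (z - p) v : ℝ) + (inner ℝ (p - x) v : ℝ) := by
      rw [← inner_add_left]; congr 1; abel
    -- ‖x-p‖² - ‖y-p‖² > 2ε‖v‖
    have hbig : 2 * ε * ‖v‖ < ‖x - p‖ ^ 2 - ‖y - p‖ ^ 2 := by
      nlinarith [norm_nonneg (x - p), norm_nonneg (y - p)]
    have hgoal : ‖v‖ ^ 2 / 2 < (inner ℝ (z - x) v : ℝ) := by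
      rw [hsplit]; nlinarith
    rw [h1, ha]
    have : ‖v‖ / 2 < ‖v‖⁻¹ * (inner ℝ (z - x) v : ℝ) := by
      rw [lt_inv_mul_iff₀ hn]; nlinarith
    linarith
  have hxa : (inner ℝ x u : ℝ) < a := by rw [ha]; linarith
  have hrx : reflectH u a x = y := by
    have h2 : (2 : ℝ) * ((inner ℝ x u : ℝ) - a) = -‖v‖ := by rw [ha]; ring
    have h3 : -‖v‖ * ‖v‖⁻¹ = -1 := by field_simp
    rw [reflectH, h2, hu, smul_smul, h3, neg_one_smul, hv]
    abel
  have := hrefl u a hu1 key x hxa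
  rwa [hrx] at this

end
end

section
/- Consider the fixed-volume α-cap process (A_t) with a kernel g, where each A_t has Lebesgue measure α > 0. If A₁ ⊆ B(0, R/4), then A_t ⊆ B(0, R) for all t ≥ 1. -/
open MeasureTheory Filter Metric

noncomputable section

section Aux

variable {d : ℕ} {v : Euc d} {a : ℝ}

lemma inner_reflect (hv : ‖v‖ = 1) (x : Euc d) :
    (inner ℝ (reflectH v a x) v : ℝ) = 2 * a - (inner ℝ x v : ℝ) := by
  have h : (inner ℝ v v : ℝ) = 1 := by
    rw [real_inner_self_eq_norm_sq, hv]; norm_num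
  rw [reflectH, inner_sub_left, real_inner_smul_left, h]
  ring

lemma reflect_involutive (hv : ‖v‖ = 1) (x : Euc d) :
    reflectH v a (reflectH v a x) = x := by
  rw [reflectH, inner_reflect hv x]
  rw [reflectH]
  rw [sub_sub, ← add_smul]
  have : 2 * ((inner ℝ x v : ℝ) - a) + 2 * (2 * a - (inner ℝ x v : ℝ) - a) = 0 := by ring
  rw [this, zero_smul, sub_zero]

lemma normsq_reflect_sub (hv : ‖v‖ = 1) (x z : Euc d) :
    ‖reflectH v a x - z‖ ^ 2
      = ‖x - z‖ ^ 2 + 4 * ((inner ℝ x v : ℝ) - a) * ((inner ℝ z v : ℝ) - a) := by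
  have hxz : reflectH v a x - z = (x - z) - (2 * ((inner ℝ x v : ℝ) - a)) • v := by
    rw [reflectH]; abel
  rw [hxz, norm_sub_sq_real, real_inner_smul_right, norm_smul, inner_sub_left,
    Real.norm_eq_abs, mul_pow, sq_abs, hv]
  ring

lemma reflect_continuous : Continuous (reflectH v a : Euc d → Euc d) := by
  apply Continuous.sub continuous_id
  exact Continuous.smul ((continuous_const.mul
    ((Continuous.inner (𝕜 := ℝ) (E := Euc d) continuous_id continuous_const).sub continuous_const))) continuous_const

lemma reflect_measurePreserving (hv : ‖v‖ = 1) :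
    MeasurePreserving (reflectH v a) (volume : Measure (Euc d)) volume := by
  set e : Euc d ≃ₗᵢ[ℝ] Euc d := (Submodule.reflection (ℝ ∙ v)).trans (LinearIsometryEquiv.neg ℝ) with he
  have hee : ∀ w : Euc d, e w = w - (2 * (inner ℝ w v : ℝ)) • v := by
    intro w
    have h1 := Submodule.reflection_singleton_apply (𝕜 := ℝ) v w
    rw [he]
    simp only [LinearIsometryEquiv.trans_apply, LinearIsometryEquiv.coe_neg, h1, hv]
    show -(2 • (((inner ℝ v w : ℝ) / ((1:ℝ)) ^ 2) • v) - w) = _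
    rw [real_inner_comm v w, neg_sub, two_smul]
    have h2 : ((inner ℝ v w : ℝ) / (1:ℝ)^2) = (inner ℝ v w : ℝ) := by norm_num
    rw [h2, two_mul, add_smul]
  have hcomp : (reflectH v a : Euc d → Euc d)
      = (fun w => w + (2 * a) • v) ∘ (fun w => e w) := by
    funext w
    simp only [Function.comp_apply, hee, reflectH]
    rw [mul_sub, sub_smul]
    abel
  rw [hcomp]
  exact (measurePreserving_add_right volume ((2*a) • v)).comp e.measurePreserving

lemma reflect_measurableEmbedding (hv : ‖v‖ = 1) :
    MeasurableEmbedding (reflectH v a : Euc d → Euc d) := by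
  let h : Homeomorph (Euc d) (Euc d) :=
    ⟨⟨reflectH v a, reflectH v a, reflect_involutive hv, reflect_involutive hv⟩,
      reflect_continuous, reflect_continuous⟩
  exact h.measurableEmbedding

lemma norm_le_of_sq_le {s t : ℝ} (hs : 0 ≤ s) (ht : 0 ≤ t) (h : s ^ 2 ≤ t ^ 2) : s ≤ t := by
  nlinarith

lemma norm_eq_of_sq_eq {s t : ℝ} (hs : 0 ≤ s) (ht : 0 ≤ t) (h : s ^ 2 = t ^ 2) : s = t := by
  nlinarith

variable {g : Euc d → ℝ} {gt : ℝ → ℝ}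

lemma kernel_mono (hk : IsKernel g gt) {x y : Euc d} (h : ‖x‖ ≤ ‖y‖) : g y ≤ g x := by
  rcases eq_or_lt_of_le h with heq | hlt
  · rw [hk.radial, hk.radial, heq]
  · rcases eq_or_lt_of_le (norm_nonneg x) with h0 | h0
    · have hx0 : x = 0 := by rwa [eq_comm, norm_eq_zero] at h0
      rw [hx0, hk.at_zero]
      exact (hk.mem_Icc y).2
    · have hdiff : ∀ r : ℝ, 0 < r → DifferentiableAt ℝ gt r := by
        intro r hr
        exact differentiableAt_of_deriv_ne_zero (ne_of_lt (hk.deriv_neg r hr))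
      have hcont : ContinuousOn gt (Set.Icc ‖x‖ ‖y‖) := by
        intro r hr
        exact ((hdiff r (lt_of_lt_of_le h0 hr.1)).continuousAt).continuousWithinAt
      have hanti : StrictAntiOn gt (Set.Icc ‖x‖ ‖y‖) := by
        apply strictAntiOn_of_deriv_neg (convex_Icc _ _) hcont
        intro r hr
        rw [interior_Icc] at hr
        exact hk.deriv_neg r (lt_trans h0 hr.1)
      have := hanti (Set.left_mem_Icc.mpr h) (Set.right_mem_Icc.mpr h) hlt
      rw [hk.radial x, hk.radial y]
      exact le_of_lt this

lemma kernel_integrableOn (hk : IsKernel g gt) {A : Set (Euc d)}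
    (hfin : volume A ≠ ⊤) (c : Euc d) :
    IntegrableOn (fun z => g (c - z)) A (volume : Measure (Euc d)) := by
  have hbd : ∀ z : Euc d, ‖g (c - z)‖ ≤ 1 := by
    intro z
    rw [Real.norm_eq_abs, abs_of_nonneg (hk.mem_Icc (c - z)).1]
    exact (hk.mem_Icc (c - z)).2
  refine Integrable.mono' (integrableOn_const (C := (1:ℝ)) hfin) ?_
    (Filter.Eventually.of_forall hbd)
  exact ((hk.contDiff.continuous).comp (continuous_const.sub continuous_id)).aestronglyMeasurable

lemma kernel_indicator_integrable (hk : IsKernel g gt) {A : Set (Euc d)} (hA : MeasurableSet A)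
    (hfin : volume A ≠ ⊤) (c : Euc d) :
    Integrable (A.indicator (fun z => g (c - z))) (volume : Measure (Euc d)) :=
  (kernel_integrableOn hk hfin c).integrable_indicator hA

lemma conv_continuous (hk : IsKernel g gt) {A : Set (Euc d)}
    (hfin : volume A ≠ ⊤) :
    Continuous (fun c : Euc d => ∫ z in A, g (c - z)) := by
  obtain ⟨K, hK⟩ := hk.lipschitz
  apply LipschitzWith.continuous (K := K * (volume A).toNNReal)
  apply LipschitzWith.of_dist_le_mul
  intro c c'
  rw [Real.dist_eq]
  have hsub : (∫ z in A, g (c - z)) - (∫ z in A, g (c' - z))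
      = ∫ z in A, (g (c - z) - g (c' - z)) :=
    (integral_sub (kernel_integrableOn hk hfin c) (kernel_integrableOn hk hfin c')).symm
  rw [hsub]
  have hb : ∀ z : Euc d, ‖g (c - z) - g (c' - z)‖ ≤ (K : ℝ) * dist c c' := by
    intro z
    have := hK.dist_le_mul (c - z) (c' - z)
    rw [Real.dist_eq] at this
    calc ‖g (c - z) - g (c' - z)‖ = |g (c - z) - g (c' - z)| := Real.norm_eq_abs _
      _ ≤ (K : ℝ) * dist (c - z) (c' - z) := this
      _ = (K : ℝ) * dist c c' := by rw [dist_sub_right]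
  calc ‖∫ z in A, (g (c - z) - g (c' - z))‖
      ≤ ((K : ℝ) * dist c c') * (volume A).toReal :=
        norm_setIntegral_le_of_norm_le_const_ae hfin.lt_top (Filter.Eventually.of_forall hb)
    _ = ((K : ℝ) * (volume A).toReal) * dist c c' := by ring
    _ = ((K * (volume A).toNNReal : NNReal) : ℝ) * dist c c' := by
        congr 1

lemma reflect_setIntegral_le (hk : IsKernel g gt) {A : Set (Euc d)} (hA : MeasurableSet A)
    (hfin : volume A ≠ ⊤) (hv : ‖v‖ = 1)
    (hrefl : ∀ z ∈ A, a < (inner ℝ z v : ℝ) → reflectH v a z ∈ A)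
    {x : Euc d} (hx : a ≤ (inner ℝ x v : ℝ)) :
    (∫ z in A, g (x - z)) ≤ ∫ z in A, g (reflectH v a x - z) := by
  set ρ : Euc d → Euc d := reflectH v a with hρ
  set χ : Euc d → ℝ := A.indicator (fun _ => 1) with hχ
  have mp : MeasurePreserving ρ (volume : Measure (Euc d)) volume :=
    reflect_measurePreserving hv
  have me : MeasurableEmbedding ρ := reflect_measurableEmbedding hv
  have hswap : ∀ z : Euc d, ‖x - ρ z‖ = ‖ρ x - z‖ := by
    intro z
    apply norm_eq_of_sq_eq (norm_nonneg _) (norm_nonneg _)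
    rw [norm_sub_rev x (ρ z), hρ]
    rw [normsq_reflect_sub hv z x, normsq_reflect_sub hv x z, norm_sub_rev z x]
    ring
  have hiso : ∀ z : Euc d, ‖ρ x - ρ z‖ = ‖x - z‖ := by
    intro z
    apply norm_eq_of_sq_eq (norm_nonneg _) (norm_nonneg _)
    rw [hρ, normsq_reflect_sub hv x (reflectH v a z), inner_reflect hv z]
    rw [show x - reflectH v a z = ρ x - z - (ρ x - z) + (x - ρ z) from by rw [hρ]; abel]
    rw [sub_self, zero_add, hswap z, hρ, normsq_reflect_sub hv x z]
    ring
  have key1 : ∀ z : Euc d, g (ρ x - ρ z) = g (x - z) := by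
    intro z; rw [hk.radial, hk.radial, hiso z]
  have key2 : ∀ z : Euc d, g (x - ρ z) = g (ρ x - z) := by
    intro z; rw [hk.radial, hk.radial, hswap z]
  have hT : ∀ c : Euc d, (fun z => χ z * g (c - z)) = A.indicator (fun z => g (c - z)) := by
    intro c; funext z
    by_cases hz : z ∈ A
    · simp [hχ, Set.indicator_of_mem hz]
    · simp [hχ, Set.indicator_of_notMem hz]
  have int1 : Integrable (fun z => χ z * g (ρ x - z)) (volume : Measure (Euc d)) := by
    rw [hT (ρ x)]; exact kernel_indicator_integrable hk hA hfin (ρ x)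
  have int2 : Integrable (fun z => χ z * g (x - z)) (volume : Measure (Euc d)) := by
    rw [hT x]; exact kernel_indicator_integrable hk hA hfin x
  have int3 : Integrable (fun z => χ (ρ z) * g (x - ρ z)) (volume : Measure (Euc d)) := by
    have heq : (fun z => χ (ρ z) * g (x - ρ z)) = (fun w => χ w * g (x - w)) ∘ ρ := rfl
    rw [heq]
    apply (me.integrable_map_iff).mp
    rw [mp.map_eq]
    exact int2
  have int4 : Integrable (fun z => χ (ρ z) * g (ρ x - ρ z)) (volume : Measure (Euc d)) := by
    have heq : (fun z => χ (ρ z) * g (ρ x - ρ z)) = (fun w => χ w * g (ρ x - w)) ∘ ρ := rfl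
    rw [heq]
    apply (me.integrable_map_iff).mp
    rw [mp.map_eq]
    exact int1
  set h : Euc d → ℝ := fun z => χ z * g (ρ x - z) - χ z * g (x - z)
      - (χ (ρ z) * g (x - ρ z) - χ (ρ z) * g (ρ x - ρ z)) with hh
  have hint : Integrable h (volume : Measure (Euc d)) := by
    rw [hh]
    exact (int1.sub int2).sub (int3.sub int4)
  have hpos : ∀ z : Euc d, 0 ≤ h z := by
    intro z
    have hform : h z = (χ z - χ (ρ z)) * (g (ρ x - z) - g (x - z)) := by
      rw [hh]
      simp only
      rw [key1 z, key2 z]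
      ring
    rw [hform]
    have hρz : (inner ℝ (ρ z) v : ℝ) = 2 * a - (inner ℝ z v : ℝ) := inner_reflect hv z
    rcases lt_trichotomy ((inner ℝ z v : ℝ)) a with hc | hc | hc
    · apply mul_nonneg
      · by_cases hmem : ρ z ∈ A
        · have hz : z ∈ A := by
            have := hrefl (ρ z) hmem (by rw [hρz]; linarith)
            rwa [hρ, reflect_involutive hv z] at this
          simp [hχ, Set.indicator_of_mem hz, Set.indicator_of_mem hmem]
        · simp only [hχ, Set.indicator_of_notMem hmem, sub_zero]
          exact Set.indicator_nonneg (fun _ _ => zero_le_one) z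
      · rw [sub_nonneg]
        apply kernel_mono hk
        apply norm_le_of_sq_le (norm_nonneg _) (norm_nonneg _)
        rw [hρ, normsq_reflect_sub hv x z]
        nlinarith [mul_nonpos_of_nonneg_of_nonpos (by linarith : (0:ℝ) ≤ (inner ℝ x v : ℝ) - a)
          (by linarith : (inner ℝ z v : ℝ) - a ≤ 0)]
    · have hgg : g (ρ x - z) = g (x - z) := by
        rw [hk.radial, hk.radial]
        congr 1
        apply norm_eq_of_sq_eq (norm_nonneg _) (norm_nonneg _)
        rw [hρ, normsq_reflect_sub hv x z, hc]
        ring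
      rw [hgg, sub_self, mul_zero]
    · rw [show (χ z - χ (ρ z)) * (g (ρ x - z) - g (x - z))
        = (χ (ρ z) - χ z) * (g (x - z) - g (ρ x - z)) from by ring]
      apply mul_nonneg
      · by_cases hmem : z ∈ A
        · have hz : ρ z ∈ A := hrefl z hmem hc
          simp [hχ, Set.indicator_of_mem hz, Set.indicator_of_mem hmem]
        · simp only [hχ, Set.indicator_of_notMem hmem, sub_zero]
          exact Set.indicator_nonneg (fun _ _ => zero_le_one) (ρ z)
      · rw [sub_nonneg]
        apply kernel_mono hk
        apply norm_le_of_sq_le (norm_nonneg _) (norm_nonneg _)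
        rw [hρ, normsq_reflect_sub hv x z]
        nlinarith [mul_nonneg (by linarith : (0:ℝ) ≤ (inner ℝ x v : ℝ) - a)
          (by linarith : (0:ℝ) ≤ (inner ℝ z v : ℝ) - a)]
  have hInt_nonneg : (0:ℝ) ≤ ∫ z, h z := integral_nonneg hpos
  have e3 : (∫ z, χ (ρ z) * g (x - ρ z)) = ∫ w, χ w * g (x - w) :=
    mp.integral_comp me (fun w => χ w * g (x - w))
  have e4 : (∫ z, χ (ρ z) * g (ρ x - ρ z)) = ∫ w, χ w * g (ρ x - w) :=
    mp.integral_comp me (fun w => χ w * g (ρ x - w))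
  have s1 := integral_sub int1 int2
  have s2 := integral_sub int3 int4
  have s3 := integral_sub (int1.sub int2) (int3.sub int4)
  simp only [Pi.sub_apply] at s3
  rw [s1, s2] at s3
  have r1 : (∫ z, χ z * g (ρ x - z)) = ∫ z in A, g (ρ x - z) := by
    rw [hT (ρ x), integral_indicator hA]
  have r2 : (∫ z, χ z * g (x - z)) = ∫ z in A, g (x - z) := by
    rw [hT x, integral_indicator hA]
  simp only [hh] at hInt_nonneg
  rw [s3, e3, e4, r1, r2] at hInt_nonneg
  linarith

end Aux

/-- If `A₁ ⊆ B(0, R/4)`, then `A t ⊆ B(0, R)` for all `t ≥ 1`. -/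
theorem stmt16 {d : ℕ} (A : ℕ → Set (Euc d)) (g : Euc d → ℝ) (gt : ℝ → ℝ)
    (α R : ℝ) (hproc : IsFixedVolCap A g gt α)
    (hvol : ∀ t : ℕ, volume (A t) = ENNReal.ofReal α)
    (h1 : A 1 ⊆ ball 0 (R / 4)) :
    ∀ t : ℕ, 1 ≤ t → A t ⊆ ball 0 R := by
  have hk := hproc.kernel
  have hαpos : (0:ℝ) < α := hproc.alpha_pos
  have hA1ne : (A 1).Nonempty := by
    apply nonempty_of_measure_ne_zero (μ := (volume : Measure (Euc d)))
    rw [hvol 1]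
    simp only [ne_eq, ENNReal.ofReal_eq_zero, not_le]
    exact hαpos
  have hR4 : 0 < R / 4 := by
    obtain ⟨x, hx⟩ := hA1ne
    have h' := mem_ball.mp (h1 hx)
    have h0 : (0:ℝ) ≤ dist x 0 := dist_nonneg
    linarith
  have hRpos : 0 < R := by linarith
  have hfinvol : ∀ t, volume (A t) ≠ ⊤ := fun t => by
    rw [hvol t]; exact ENNReal.ofReal_ne_top
  have main : ∀ t, 1 ≤ t → MeasurableSet (A t) ∧
      (∀ v : Euc d, ‖v‖ = 1 → ∀ a : ℝ, R/4 < a → ∀ x ∈ A t, a < (inner ℝ x v : ℝ) →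
        reflectH v a x ∈ A t) := by
    intro t ht
    induction t with
    | zero => omega
    | succ n ih =>
      rcases Nat.eq_zero_or_pos n with hn | hn
      · subst hn
        constructor
        · rw [hproc.update 0]
          exact measurableSet_le measurable_const
            (conv_continuous hk (hfinvol 0)).measurable
        · intro v hv a ha x hx hax
          exfalso
          have h1x : ‖x‖ < R/4 := mem_ball_zero_iff.mp (h1 hx)
          have h2x : (inner ℝ x v : ℝ) ≤ ‖x‖ * ‖v‖ := real_inner_le_norm x v
          rw [hv, mul_one] at h2x
          linarith
      · obtain ⟨hmeas, hP⟩ := ih hn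
        constructor
        · rw [hproc.update n]
          exact measurableSet_le measurable_const
            (conv_continuous hk (hfinvol n)).measurable
        · intro v hv a ha x hx hax
          rw [hproc.update n] at hx ⊢
          simp only [Set.mem_setOf_eq] at hx ⊢
          refine le_trans hx ?_
          exact reflect_setIntegral_le hk hmeas (hfinvol n) hv
            (fun z hz haz => hP v hv a ha z hz haz) (le_of_lt hax)
  intro t ht x hx
  rw [mem_ball_zero_iff]
  by_contra hL
  push_neg at hL
  obtain ⟨_, hP⟩ := main t ht
  rcases Nat.eq_zero_or_pos d with hd | hd
  · subst hd
    have hx0 : ‖x‖ = 0 := by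
      simp [EuclideanSpace.norm_eq]
    linarith
  · set L := ‖x‖ with hLdef
    have hsub : ball (0 : Euc d) (L - R/2) ⊆ A t := by
      intro y hy
      rw [mem_ball_zero_iff] at hy
      have hyx : y ≠ x := by
        intro h
        rw [h] at hy
        linarith
      set z := x - y with hz
      have hzne : z ≠ 0 := sub_ne_zero.mpr (Ne.symm hyx)
      have hzpos : 0 < ‖z‖ := norm_pos_iff.mpr hzne
      set v : Euc d := ‖z‖⁻¹ • z with hvdef
      have hv : ‖v‖ = 1 := by
        rw [hvdef, norm_smul, norm_inv, norm_norm, inv_mul_cancel₀ hzpos.ne']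
      have hinner : (inner ℝ x v : ℝ) = ‖z‖⁻¹ * (inner ℝ x z : ℝ) := by
        rw [hvdef, real_inner_smul_right]
      have hxz : (inner ℝ x z : ℝ) = L^2 - (inner ℝ x y : ℝ) := by
        rw [hz, inner_sub_right, real_inner_self_eq_norm_sq]
      have hnz2 : ‖z‖^2 = L^2 - 2*(inner ℝ x y : ℝ) + ‖y‖^2 := by
        rw [hz, norm_sub_sq_real]
      have hztri : ‖z‖ ≤ L + ‖y‖ := by
        rw [hz]
        exact norm_sub_le x y
      set a : ℝ := (inner ℝ x v : ℝ) - ‖z‖/2 with hadef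
      have hmul : a * ‖z‖ = (inner ℝ x z : ℝ) - ‖z‖^2/2 := by
        rw [hadef, hinner]
        field_simp
      have hkey : R/4 * ‖z‖ < a * ‖z‖ := by
        rw [hmul]
        nlinarith [norm_nonneg y]
      have ha : R/4 < a := lt_of_mul_lt_mul_right hkey (le_of_lt hzpos)
      have hax : a < (inner ℝ x v : ℝ) := by
        rw [hadef]
        linarith
      have hrefl_eq : reflectH v a x = y := by
        rw [reflectH, hadef]
        rw [show (2 * ((inner ℝ x v:ℝ) - ((inner ℝ x v:ℝ) - ‖z‖/2))) = ‖z‖ from by ring]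
        rw [hvdef, smul_smul, mul_inv_cancel₀ hzpos.ne', one_smul, hz, sub_sub_cancel]
      rw [← hrefl_eq]
      exact hP v hv a ha x hx hax
    haveI : Nontrivial (Euc d) := by
      apply Module.nontrivial_of_finrank_pos (R := ℝ)
      rw [finrank_euclideanSpace_fin]
      omega
    have h2 : volume (ball (0:Euc d) (L - R/2)) ≤ ENNReal.ofReal α := by
      rw [← hvol t]; exact measure_mono hsub
    have h3 : ENNReal.ofReal α ≤ volume (ball (0:Euc d) (R/4)) := by
      rw [← hvol 1]; exact measure_mono h1
    have hle := le_trans h2 h3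
    rw [Measure.addHaar_ball (volume : Measure (Euc d)) 0 (by linarith : (0:ℝ) ≤ L - R/2),
      Measure.addHaar_ball (volume : Measure (Euc d)) 0 (by linarith : (0:ℝ) ≤ R/4)] at hle
    have hBpos : volume (ball (0:Euc d) 1) ≠ 0 := (measure_ball_pos volume 0 one_pos).ne'
    have hBfin : volume (ball (0:Euc d) 1) ≠ ⊤ := measure_ball_lt_top.ne
    rw [ENNReal.mul_le_mul_iff_left hBpos hBfin] at hle
    rw [ENNReal.ofReal_le_ofReal_iff (by positivity)] at hle
    rw [show Module.finrank ℝ (Euc d) = d from finrank_euclideanSpace_fin] at hle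
    have hstrict : (R/4)^d < (L - R/2)^d :=
      pow_lt_pow_left₀ (by linarith) (by linarith) (by omega)
    linarith

end
end

section
/- Let g : ℝ^d → ℝ be bounded, measurable, and radially symmetric, i.e. g(x) = g̃(‖x‖₂) for some g̃ : [0,∞) → ℝ. Let ψ : ℝ^d → [0,1] be Lebesgue integrable, let H be an oriented hyperplane, and define f(x) = ∫_{ℝ^d} ψ(y) g(x − y) dy. Then for every x ∈ ℝ^d, f(x^H) − f(x) = ∫_{H⁺} (ψ(y) − ψ(y^H)) (g(x^H − y) − g(x − y)) dy. -/
open MeasureTheory Filter Metric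

noncomputable section

section AuxReflect

variable {d : ℕ} {u : Euc d} {a : ℝ}

lemma inner_reflectH (hu : ‖u‖ = 1) (y : Euc d) :
    (inner ℝ (reflectH u a y) u : ℝ) = 2 * a - inner ℝ y u := by
  have h : (inner ℝ u u : ℝ) = 1 := by
    rw [real_inner_self_eq_norm_sq, hu]; norm_num
  simp only [reflectH, inner_sub_left, real_inner_smul_left, h]
  ring

lemma reflectH_reflectH (hu : ‖u‖ = 1) (y : Euc d) :
    reflectH u a (reflectH u a y) = y := by
  rw [show reflectH u a (reflectH u a y)
      = reflectH u a y - (2 * ((inner ℝ (reflectH u a y) u : ℝ) - a)) • u from rfl,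
    inner_reflectH hu,
    show reflectH u a y = y - (2 * ((inner ℝ y u : ℝ) - a)) • u from rfl]
  module

lemma reflectH_eq (hu : ‖u‖ = 1) (y : Euc d) :
    reflectH u a y = (Submodule.reflection (ℝ ∙ u)ᗮ) y + (2 * a) • u := by
  rw [Submodule.reflection_orthogonal_apply, Submodule.reflection_singleton_apply, hu, real_inner_comm]
  simp only [reflectH]
  push_cast
  norm_num
  module

lemma measurePreserving_reflectH (hu : ‖u‖ = 1) :
    MeasurePreserving (reflectH u a) (volume : Measure (Euc d)) volume := by
  have h1 : MeasurePreserving (fun y : Euc d => (Submodule.reflection (ℝ ∙ u)ᗮ) y) volume volume :=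
    (Submodule.reflection (ℝ ∙ u)ᗮ).measurePreserving
  have h2 : MeasurePreserving (fun y : Euc d => y + (2 * a) • u) volume volume :=
    measurePreserving_add_right volume _
  have h3 := h2.comp h1
  have he : ((fun y : Euc d => y + (2 * a) • u) ∘ fun y => (Submodule.reflection (ℝ ∙ u)ᗮ) y)
      = reflectH u a := by
    funext y; simp [Function.comp, reflectH_eq hu]
  rwa [he] at h3

lemma continuous_reflectH : Continuous (reflectH u a) := by
  have h1 : Continuous fun x : Euc d => (2 * ((inner ℝ x u : ℝ) - a)) :=
    continuous_const.mul ((continuous_id.inner continuous_const).sub continuous_const)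
  exact continuous_id.sub (h1.smul continuous_const)

lemma measurableEmbedding_reflectH (hu : ‖u‖ = 1) :
    MeasurableEmbedding (reflectH u a) :=
  continuous_reflectH.measurableEmbedding
    (Function.LeftInverse.injective (g := reflectH u a) (reflectH_reflectH hu))

lemma norm_reflectH_sub (hu : ‖u‖ = 1) (y z : Euc d) :
    ‖reflectH u a y - reflectH u a z‖ = ‖y - z‖ := by
  rw [reflectH_eq hu, reflectH_eq hu, add_sub_add_right_eq_sub, ← map_sub,
    (Submodule.reflection (ℝ ∙ u)ᗮ).norm_map]

lemma plane_null (hu : ‖u‖ = 1) :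
    (volume : Measure (Euc d)) {z : Euc d | (inner ℝ z u : ℝ) = a} = 0 := by
  have h0 : (volume : Measure (Euc d)) {z : Euc d | (inner ℝ z u : ℝ) = 0} = 0 := by
    have hset : {z : Euc d | (inner ℝ z u : ℝ) = 0} = ((ℝ ∙ u)ᗮ : Submodule ℝ (Euc d)) := by
      ext z
      simp [Submodule.mem_orthogonal_singleton_iff_inner_left]
    rw [hset]
    refine Measure.addHaar_submodule _ _ ?_
    intro h
    have hu0 : (inner ℝ u u : ℝ) = 1 := by
      rw [real_inner_self_eq_norm_sq, hu]; norm_num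
    have : u ∈ ((ℝ ∙ u)ᗮ : Submodule ℝ (Euc d)) := h ▸ Submodule.mem_top
    rw [Submodule.mem_orthogonal_singleton_iff_inner_right] at this
    rw [this] at hu0
    norm_num at hu0
  have hpre : {z : Euc d | (inner ℝ z u : ℝ) = a}
      = (fun z : Euc d => z + (-(a • u))) ⁻¹' {z : Euc d | (inner ℝ z u : ℝ) = 0} := by
    ext z
    have hu0 : (inner ℝ u u : ℝ) = 1 := by
      rw [real_inner_self_eq_norm_sq, hu]; norm_num
    simp only [Set.mem_preimage, Set.mem_setOf_eq, inner_add_left, inner_neg_left,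
      real_inner_smul_left, hu0]
    constructor <;> intro h <;> linarith
  rw [hpre, measure_preimage_add_right]
  exact h0

end AuxReflect

/-- Reflection identity for the convolution `f = ψ * g` of radially symmetric `g`:
`f(x^H) - f(x) = ∫_{H⁺} (ψ(y) - ψ(y^H)) (g(x^H - y) - g(x - y)) dy`. -/
theorem stmt17 {d : ℕ} (g : Euc d → ℝ) (gt : ℝ → ℝ)
    (hrad : ∀ x : Euc d, g x = gt ‖x‖) (hgm : Measurable g)
    (hgb : ∃ M : ℝ, ∀ x : Euc d, |g x| ≤ M)
    (ψ : Euc d → ℝ) (hψmem : ∀ x, ψ x ∈ Set.Icc (0:ℝ) 1) (hψi : Integrable ψ)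
    (u : Euc d) (hu : ‖u‖ = 1) (a : ℝ) (x : Euc d) :
    (∫ y, ψ y * g (reflectH u a x - y)) - (∫ y, ψ y * g (x - y)) =
      ∫ y in {z : Euc d | a < (inner ℝ z u : ℝ)},
        (ψ y - ψ (reflectH u a y)) * (g (reflectH u a x - y) - g (x - y)) := by
  obtain ⟨M, hM⟩ := hgb
  set σ : Euc d → Euc d := reflectH u a with hσdef
  have hσσ : ∀ y, σ (σ y) = y := fun y => reflectH_reflectH hu y
  have hginv : ∀ y z : Euc d, g (σ y - σ z) = g (y - z) := fun y z => by
    rw [hrad, hrad, norm_reflectH_sub hu]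
  have hmeas : ∀ w : Euc d, Measurable fun y : Euc d => g (w - y) := fun w =>
    hgm.comp (measurable_const.sub measurable_id)
  have hint : ∀ w : Euc d, Integrable (fun y => ψ y * g (w - y)) := by
    intro w
    have := hψi.bdd_mul (f := fun y : Euc d => g (w - y))
      (c := M) (hmeas w).aestronglyMeasurable (ae_of_all _ fun y => by simpa using hM (w - y))
    simpa [mul_comm] using this
  set h : Euc d → ℝ := fun y => ψ y * (g (σ x - y) - g (x - y)) with hhdef
  have hih : Integrable h := by
    have := (hint (σ x)).sub (hint x)
    have e : h = fun y => ψ y * g (σ x - y) - ψ y * g (x - y) := by funext y; simp [hhdef, mul_sub]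
    rw [e]; exact this
  have hstep1 : (∫ y, ψ y * g (σ x - y)) - ∫ y, ψ y * g (x - y) = ∫ y, h y := by
    rw [← integral_sub (hint (σ x)) (hint x)]
    congr 1; funext y; simp [hhdef]; ring
  -- sets
  have hcont : Continuous fun z : Euc d => (inner ℝ z u : ℝ) :=
    continuous_id.inner continuous_const
  set S : Set (Euc d) := {z : Euc d | a < (inner ℝ z u : ℝ)} with hSdef
  set T : Set (Euc d) := {z : Euc d | (inner ℝ z u : ℝ) < a} with hTdef
  have hS : MeasurableSet S := measurableSet_lt measurable_const hcont.measurable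
  have hsplit : ∫ y, h y = (∫ y in S, h y) + ∫ y in Sᶜ, h y :=
    (integral_add_compl hS hih).symm
  have hScT : Sᶜ =ᵐ[volume] T := by
    have hsub1 : Sᶜ \ T ⊆ {z : Euc d | (inner ℝ z u : ℝ) = a} := by
      intro z hz
      simp only [hSdef, hTdef, Set.mem_diff, Set.mem_compl_iff, Set.mem_setOf_eq,
        not_lt] at hz
      show (inner ℝ z u : ℝ) = a
      linarith [hz.1, hz.2]
    have hsub2 : T \ Sᶜ ⊆ {z : Euc d | (inner ℝ z u : ℝ) = a} := by
      intro z hz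
      simp only [hSdef, hTdef, Set.mem_diff, Set.mem_compl_iff, Set.mem_setOf_eq,
        not_not, not_lt] at hz
      show (inner ℝ z u : ℝ) = a
      linarith [hz.1, hz.2]
    apply MeasureTheory.ae_eq_set.mpr
    exact ⟨measure_mono_null hsub1 (plane_null hu), measure_mono_null hsub2 (plane_null hu)⟩
  have hco : ∫ y in Sᶜ, h y = ∫ y in T, h y := setIntegral_congr_set hScT
  have hpre : σ ⁻¹' T = S := by
    ext y
    simp only [Set.mem_preimage, hTdef, hSdef, Set.mem_setOf_eq, hσdef, inner_reflectH hu]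
    constructor <;> intro hy <;> linarith
  have hchg : ∫ y in T, h y = ∫ y in S, h (σ y) := by
    rw [← (measurePreserving_reflectH hu).setIntegral_preimage_emb
      (measurableEmbedding_reflectH hu) h T, hpre]
  have hcomp : Integrable fun y => h (σ y) := by
    have := ((measurePreserving_reflectH (a := a) hu).integrable_comp_emb
      (measurableEmbedding_reflectH (a := a) hu) (g := h)).mpr hih
    exact this
  have hcombine : (∫ y in S, h y) + ∫ y in S, h (σ y)
      = ∫ y in S, (ψ y - ψ (σ y)) * (g (σ x - y) - g (x - y)) := by
    rw [← integral_add hih.integrableOn hcomp.integrableOn]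
    refine setIntegral_congr_fun hS fun y _ => ?_
    have h1 : g (σ x - σ y) = g (x - y) := hginv x y
    have h2 : g (x - σ y) = g (σ x - y) := by
      conv_lhs => rw [← hσσ x]
      rw [hginv (σ x) y]
    simp only [hhdef]
    rw [h1, h2]
    ring
  rw [hstep1, hsplit, hco, hchg, hcombine]

end
end
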